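/- Let n_A, n_B, n_C be positive real numbers and let c_A, c_B, c_C be nonnegative real numbers with c_A · c_B = 0. Define Ψ_A = c_A + (n_A/n_C)·c_C and Ψ_B = c_B + (n_B/n_C)·c_C. Then c_A = (1/n_B)·max(n_B·Ψ_A − n_A·Ψ_B, 0), c_B = −(1/n_A)·min(n_B·Ψ_A − n_A·Ψ_B, 0), and c_C = (n_C/n_A)·(Ψ_A − c_A). In particular, the concentrations are uniquely determined by the invariants Ψ_A and Ψ_B. -/
import Mathlib


/-- For a fast bimolecular reaction `n_A A + n_B B → n_C C`, if the reactants cannot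
coexist (`c_A · c_B = 0`), then the concentrations are recovered from the invariants
`Ψ_A = c_A + (n_A/n_C)·c_C` and `Ψ_B = c_B + (n_B/n_C)·c_C` by the max/min formulas;
in particular they are uniquely determined by the invariants. -/
theorem fast_reaction_concentrations_from_invariants
    (nA nB nC : ℝ) (hnA : 0 < nA) (hnB : 0 < nB) (hnC : 0 < nC)
    (cA cB cC : ℝ) (hcA : 0 ≤ cA) (hcB : 0 ≤ cB) (hcC : 0 ≤ cC)
    (hnocoexist : cA * cB = 0)
    (ΨA ΨB : ℝ)
    (hΨA : ΨA = cA + (nA / nC) * cC)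
    (hΨB : ΨB = cB + (nB / nC) * cC) :
    cA = (1 / nB) * max (nB * ΨA - nA * ΨB) 0 ∧
    cB = -(1 / nA) * min (nB * ΨA - nA * ΨB) 0 ∧
    cC = (nC / nA) * (ΨA - cA) := by
  have hnC' : nC ≠ 0 := hnC.ne'
  have hkey : nB * ΨA - nA * ΨB = nB * cA - nA * cB := by
    subst hΨA hΨB; field_simp; ring
  have hC : cC = (nC / nA) * (ΨA - cA) := by
    subst hΨA; field_simp; ring
  rcases mul_eq_zero.mp hnocoexist with h | h
  · have hle : nB * ΨA - nA * ΨB ≤ 0 := by rw [hkey, h]; nlinarith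
    have hmax : max (nB * ΨA - nA * ΨB) 0 = 0 := max_eq_right hle
    have hmin : min (nB * ΨA - nA * ΨB) 0 = -(nA * cB) := by
      rw [min_eq_left hle, hkey, h]; ring
    refine ⟨by rw [hmax, h, mul_zero], by rw [hmin]; field_simp, hC⟩
  · have hnn : 0 ≤ nB * ΨA - nA * ΨB := by rw [hkey, h]; nlinarith
    have hmax : max (nB * ΨA - nA * ΨB) 0 = nB * cA := by
      rw [max_eq_left hnn, hkey, h]; ring
    have hmin : min (nB * ΨA - nA * ΨB) 0 = 0 := min_eq_right hnn
    refine ⟨by rw [hmax]; field_simp, by rw [hmin, h]; ring, hC⟩
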